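/- For every natural number n ≥ 2: (a) the antiortholattice D2^n ⊕ D2^n satisfies the identity C(n): x1~ ∨ … ∨ xn~ ∨ (⋀_{1≤i<j≤n}(x_i ∧ x_j)~ ∧ (x1 ∨ … ∨ xn)) ≈ x1~ ∨ … ∨ xn~ ∨ (⋀_{1≤i<j≤n}(x_i ∧ x_j)~ ∧ x1′ ∧ … ∧ xn′); (b) for any cardinal λ > n, D2^λ ⊕ D2^λ fails C(n), and for any cardinal κ ≥ n, D2^κ ⊕ D2 ⊕ D2^κ fails C(n). -/
import Mathlib


open scoped Classical

/-- A bounded involution lattice (BI-lattice): a bounded lattice with an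
order-reversing involution. -/
class BILattice (α : Type*) extends Lattice α, BoundedOrder α where
  inv : α → α
  inv_anti : ∀ a b : α, a ≤ b → inv b ≤ inv a
  inv_inv : ∀ a : α, inv (inv a) = a

open BILattice

/-- A pseudo-Kleene algebra. -/
class PseudoKleene (α : Type*) extends BILattice α where
  kleene : ∀ a b : α, a ⊓ inv a ≤ b ⊔ inv b

/-- A Brouwer–Zadeh lattice. -/
class BZLattice (α : Type*) extends PseudoKleene α where
  brou : α → α
  brou_anti : ∀ a b : α, a ≤ b → brou b ≤ brou a
  brou_inf : ∀ a : α, a ⊓ brou a = ⊥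
  le_brou_brou : ∀ a : α, a ≤ brou (brou a)
  brou_brou : ∀ a : α, brou (brou a) = inv (brou a)

open BZLattice

/-- A PBZ*-lattice: a paraorthomodular BZ-lattice satisfying condition (∗). -/
class PBZLattice (α : Type*) extends BZLattice α where
  paraortho : ∀ a b : α, a ≤ b → inv a ⊓ b = ⊥ → a = b
  star : ∀ a : α, brou (a ⊓ inv a) = brou a ⊔ brou (inv a)

/-- An antiortholattice: a PBZ*-lattice whose only sharp elements are ⊥ and ⊤. -/
class Antiortholattice (α : Type*) extends PBZLattice α where
  sharp_trivial : ∀ a : α, a ⊔ inv a = ⊤ → a = ⊥ ∨ a = ⊤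

open BILattice BZLattice

/-- `e : Set ι → α` presents the antiortholattice `α` as the ordinal sum
`D2^ι ⊕ (D2^ι)^d` (possibly with a two-element chain in the middle): `e` is a
bounded-lattice embedding of the Boolean algebra of subsets of `ι` onto the
lower half, and every element of `α` lies in the lower half or in its image
under the involution. -/
def IsBoolSumRep (ι : Type*) {α : Type*} [Antiortholattice α] (e : Set ι → α) : Prop :=
  (∀ s t : Set ι, e s ≤ e t ↔ s ⊆ t) ∧
  (∀ s t : Set ι, e (s ∩ t) = e s ⊓ e t) ∧
  (∀ s t : Set ι, e (s ∪ t) = e s ⊔ e t) ∧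
  e ∅ = ⊥ ∧
  (∀ a : α, (∃ s : Set ι, a = e s) ∨ (∃ s : Set ι, a = inv (e s)))

/-- The identity `C(n)`:
`x1~ ∨ … ∨ xn~ ∨ (⋀_{i<j}(xᵢ ∧ xⱼ)~ ∧ (x1 ∨ … ∨ xn)) ≈
 x1~ ∨ … ∨ xn~ ∨ (⋀_{i<j}(xᵢ ∧ xⱼ)~ ∧ x1′ ∧ … ∧ xn′)`. -/
def CIdent (n : ℕ) (α : Type*) [Antiortholattice α] : Prop :=
  ∀ x : Fin n → α,
    (Finset.univ.sup fun i => brou (x i)) ⊔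
        (((Finset.univ.filter fun q : Fin n × Fin n => q.1 < q.2).inf
            fun q => brou (x q.1 ⊓ x q.2)) ⊓ (Finset.univ.sup fun i => x i)) =
      (Finset.univ.sup fun i => brou (x i)) ⊔
        (((Finset.univ.filter fun q : Fin n × Fin n => q.1 < q.2).inf
            fun q => brou (x q.1 ⊓ x q.2)) ⊓ (Finset.univ.inf fun i => inv (x i)))

section AuxLemmas

variable {α : Type*} [Antiortholattice α]

lemma aux_inv_top : inv (⊤ : α) = ⊥ := by
  have h := inv_anti (inv (⊥ : α)) ⊤ le_top
  rw [BILattice.inv_inv] at h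
  exact le_bot_iff.mp h

lemma aux_inv_bot : inv (⊥ : α) = ⊤ := by
  rw [← aux_inv_top, BILattice.inv_inv]

lemma aux_inv_sup (a b : α) : inv (a ⊔ b) = inv a ⊓ inv b := by
  apply le_antisymm
  · exact le_inf (inv_anti _ _ le_sup_left) (inv_anti _ _ le_sup_right)
  · have h1 : a ≤ inv (inv a ⊓ inv b) := by
      have := inv_anti (inv a ⊓ inv b) (inv a) inf_le_left
      rwa [BILattice.inv_inv] at this
    have h2 : b ≤ inv (inv a ⊓ inv b) := by
      have := inv_anti (inv a ⊓ inv b) (inv b) inf_le_right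
      rwa [BILattice.inv_inv] at this
    have := inv_anti _ _ (sup_le h1 h2)
    rwa [BILattice.inv_inv] at this

lemma aux_inv_inf (a b : α) : inv (a ⊓ b) = inv a ⊔ inv b := by
  have := aux_inv_sup (inv a) (inv b)
  rw [BILattice.inv_inv, BILattice.inv_inv] at this
  rw [← this, BILattice.inv_inv]

lemma aux_inv_finset_sup {β : Type*} (s : Finset β) (f : β → α) :
    inv (s.sup f) = s.inf fun b => inv (f b) := by
  induction s using Finset.cons_induction with
  | empty => simpa using aux_inv_bot
  | cons a s ha ih => rw [Finset.sup_cons, Finset.inf_cons, aux_inv_sup, ih]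

lemma aux_brou_cases (a : α) : brou a = ⊥ ∨ brou a = ⊤ := by
  apply Antiortholattice.sharp_trivial
  have h1 : brou a ⊓ inv (brou a) = ⊥ := by
    rw [← brou_brou]; exact brou_inf _
  have h2 := congrArg inv h1
  rw [aux_inv_inf, BILattice.inv_inv, aux_inv_bot] at h2
  rwa [sup_comm] at h2

lemma aux_brou_of_ne_bot {a : α} (h : a ≠ ⊥) : brou a = ⊥ := by
  rcases aux_brou_cases a with h' | h'
  · exact h'
  · have := brou_inf a
    rw [h', inf_top_eq] at this
    exact absurd this h

lemma aux_brou_bot : brou (⊥ : α) = ⊤ := by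
  rcases aux_brou_cases (⊥ : α) with h | h
  · have h2 := brou_brou (⊥ : α)
    rw [h, aux_inv_bot] at h2
    exact h2
  · exact h

lemma aux_e_sup {ι : Type*} {e : Set ι → α}
    (hsup : ∀ s t : Set ι, e (s ∪ t) = e s ⊔ e t) (hbot : e ∅ = ⊥)
    {β : Type*} (s : Finset β) (g : β → Set ι) :
    e (s.sup g) = s.sup fun b => e (g b) := by
  induction s using Finset.cons_induction with
  | empty => simpa [Set.bot_eq_empty] using hbot
  | cons a s ha ih =>
    rw [Finset.sup_cons, Finset.sup_cons, ← ih, ← hsup]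
    rfl

/-- Common computation for the failing instances: substituting distinct atoms
`e {f i}` for the variables forces `e T = inv (e T)` where `T` is the union of
the atoms. -/
lemma aux_counterexample {ι : Type*} {e : Set ι → α}
    (hrep : IsBoolSumRep ι e) {n : ℕ} {f : Fin n → ι} (hf : Function.Injective f)
    (hC : CIdent n α) :
    e (Finset.univ.sup fun i => ({f i} : Set ι)) =
      inv (e (Finset.univ.sup fun i => ({f i} : Set ι))) := by
  obtain ⟨hle, hinf, hsup, hbot, hcov⟩ := hrep
  set x : Fin n → α := fun i => e {f i} with hx
  have hxne : ∀ i, x i ≠ ⊥ := by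
    intro i h
    rw [hx] at h
    simp only at h
    rw [← hbot] at h
    have h2 : ({f i} : Set ι) ⊆ ∅ := (hle _ _).mp h.le
    exact h2 rfl
  have hB : (Finset.univ.sup fun i => brou (x i)) = ⊥ := by
    apply le_bot_iff.mp
    apply Finset.sup_le
    intro i _
    rw [aux_brou_of_ne_bot (hxne i)]
  have hP : ((Finset.univ.filter fun q : Fin n × Fin n => q.1 < q.2).inf
      fun q => brou (x q.1 ⊓ x q.2)) = ⊤ := by
    apply le_antisymm le_top
    apply Finset.le_inf
    intro q hq
    have hlt : q.1 < q.2 := (Finset.mem_filter.mp hq).2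
    have hmeet : x q.1 ⊓ x q.2 = ⊥ := by
      rw [hx]
      simp only
      rw [← hinf]
      have hss : ({f q.1} : Set ι) ∩ {f q.2} = ∅ :=
        Set.singleton_inter_eq_empty.mpr
          (fun hm => hlt.ne (hf (Set.mem_singleton_iff.mp hm)))
      rw [hss, hbot]
    rw [hmeet, aux_brou_bot]
  have h := hC x
  rw [hB, hP, bot_sup_eq, bot_sup_eq, top_inf_eq, top_inf_eq] at h
  have hinvsup : (Finset.univ.inf fun i => inv (x i)) =
      inv (Finset.univ.sup fun i => x i) := (aux_inv_finset_sup _ _).symm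
  rw [hinvsup] at h
  have hsupx : (Finset.univ.sup fun i => x i) =
      e (Finset.univ.sup fun i => ({f i} : Set ι)) := by
    rw [aux_e_sup hsup hbot]
  rw [hsupx] at h
  exact h

end AuxLemmas

/-- For every `n ≥ 2`: (a) the antiortholattice `D2^n ⊕ D2^n` satisfies `C(n)`;
(b) for any cardinal `λ > n` (a type `ι` with at least `n + 1` elements),
`D2^λ ⊕ D2^λ` fails `C(n)`; and for any cardinal `κ ≥ n` (a type `ι` with at
least `n` elements), `D2^κ ⊕ D2 ⊕ D2^κ` fails `C(n)`. -/
theorem CIdent_holds_and_fails (n : ℕ) (hn : 2 ≤ n) :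
    (∀ (α : Type*) [Antiortholattice α] (e : Set (Fin n) → α),
        IsBoolSumRep (Fin n) e → inv (e Set.univ) = e Set.univ → CIdent n α) ∧
    (∀ (ι : Type*), (∃ f : Fin (n + 1) → ι, Function.Injective f) →
      ∀ (α : Type*) [Antiortholattice α] (e : Set ι → α),
        IsBoolSumRep ι e → inv (e Set.univ) = e Set.univ → ¬ CIdent n α) ∧
    (∀ (ι : Type*), (∃ f : Fin n → ι, Function.Injective f) →
      ∀ (α : Type*) [Antiortholattice α] (e : Set ι → α),
        IsBoolSumRep ι e → e Set.univ ≤ inv (e Set.univ) →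
          e Set.univ ≠ inv (e Set.univ) → ¬ CIdent n α) := by
  refine ⟨?_, ?_, ?_⟩
  · -- (a) D2^n ⊕ D2^n satisfies C(n)
    intro α _ e hrep hmid x
    obtain ⟨hle, hinf, hsup, hbot, hcov⟩ := hrep
    by_cases hb : ∃ i, x i = ⊥
    · obtain ⟨i, hi⟩ := hb
      have hB : (Finset.univ.sup fun i => brou (x i)) = ⊤ := by
        apply le_antisymm le_top
        refine le_trans ?_ (Finset.le_sup (Finset.mem_univ i))
        rw [hi, aux_brou_bot]
      rw [hB, top_sup_eq, top_sup_eq]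
    · push_neg at hb
      have hB : (Finset.univ.sup fun i => brou (x i)) = ⊥ := by
        apply le_bot_iff.mp
        apply Finset.sup_le
        intro i _
        rw [aux_brou_of_ne_bot (hb i)]
      rw [hB, bot_sup_eq, bot_sup_eq]
      by_cases hp : ∃ q ∈ (Finset.univ.filter fun q : Fin n × Fin n => q.1 < q.2),
          x q.1 ⊓ x q.2 ≠ ⊥
      · obtain ⟨q, hq, hq2⟩ := hp
        have hP : ((Finset.univ.filter fun q : Fin n × Fin n => q.1 < q.2).inf
            fun q => brou (x q.1 ⊓ x q.2)) = ⊥ := by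
          apply le_bot_iff.mp
          refine le_trans (Finset.inf_le hq) ?_
          rw [aux_brou_of_ne_bot hq2]
        rw [hP, bot_inf_eq, bot_inf_eq]
      · push_neg at hp
        have hP : ((Finset.univ.filter fun q : Fin n × Fin n => q.1 < q.2).inf
            fun q => brou (x q.1 ⊓ x q.2)) = ⊤ := by
          apply le_antisymm le_top
          apply Finset.le_inf
          intro q hq
          rw [hp q hq, aux_brou_bot]
        rw [hP, top_inf_eq, top_inf_eq]
        -- pairwise disjointness
        have hdisj : ∀ i j : Fin n, i ≠ j → x i ⊓ x j = ⊥ := by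
          intro i j hij
          rcases lt_or_gt_of_ne hij with h | h
          · exact hp (i, j) (by simp [h])
          · rw [inf_comm]
            exact hp (j, i) (by simp [h])
        have h0n : 0 < n := by omega
        have hunivne : e (Set.univ : Set (Fin n)) ≠ ⊥ := by
          intro h
          rw [← hbot] at h
          have h2 : (Set.univ : Set (Fin n)) ⊆ ∅ := (hle _ _).mp h.le
          exact h2 (Set.mem_univ (⟨0, h0n⟩ : Fin n))
        -- every x i lies in the lower half
        have hlow : ∀ i, ∃ s, x i = e s := by
          intro i
          rcases hcov (x i) with h | ⟨t, ht⟩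
          · exact h
          · exfalso
            have hxi : e Set.univ ≤ x i := by
              rw [ht, ← hmid]
              exact inv_anti _ _ ((hle t Set.univ).mpr (Set.subset_univ t))
            obtain ⟨j, hj⟩ : ∃ j : Fin n, j ≠ i :=
              Fintype.exists_ne_of_one_lt_card (by simpa using (by omega : 1 < n)) i
            rcases hcov (x j) with ⟨s, hs⟩ | ⟨t', ht'⟩
            · have h1 : x j ≤ x i := by
                refine le_trans ?_ hxi
                rw [hs]
                exact (hle _ _).mpr (Set.subset_univ s)
              exact hb j (by rw [← hdisj j i hj, inf_eq_left.mpr h1])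
            · have h2 : e Set.univ ≤ x j := by
                rw [ht', ← hmid]
                exact inv_anti _ _ ((hle t' Set.univ).mpr (Set.subset_univ t'))
              exact hunivne (le_bot_iff.mp
                (by rw [← hdisj i j (Ne.symm hj)]; exact le_inf hxi h2))
        choose s hs using hlow
        have hsne : ∀ i, s i ≠ ∅ := by
          intro i h
          exact hb i (by rw [hs i, h, hbot])
        have hsdisj : ∀ i j : Fin n, i ≠ j → s i ∩ s j = ∅ := by
          intro i j hij
          have h1 : e (s i ∩ s j) = e ∅ := by
            rw [hinf, ← hs i, ← hs j, hdisj i j hij, hbot]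
          exact subset_antisymm ((hle _ _).mp h1.le) ((hle _ _).mp h1.ge)
        choose a ha using fun i => Set.nonempty_iff_ne_empty.mpr (hsne i)
        have hainj : Function.Injective a := by
          intro i j h
          by_contra hij
          have hm : a i ∈ s i ∩ s j := ⟨ha i, h ▸ ha j⟩
          rw [hsdisj i j hij] at hm
          exact hm
        have hasurj : Function.Surjective a := Finite.surjective_of_injective hainj
        have hT : (Finset.univ.sup fun i => s i) = (Set.univ : Set (Fin n)) := by
          apply Set.eq_univ_of_forall
          intro b
          obtain ⟨i, hi⟩ := hasurj b
          exact Finset.le_sup (f := fun i => s i) (Finset.mem_univ i) (hi ▸ ha i)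
        have hsupx : (Finset.univ.sup fun i => x i) = e Set.univ := by
          have h1 : (Finset.univ.sup fun i => x i) =
              Finset.univ.sup fun i => e (s i) :=
            Finset.sup_congr rfl fun i _ => hs i
          rw [h1, ← aux_e_sup hsup hbot, hT]
        rw [hsupx]
        have h2 : (Finset.univ.inf fun i => inv (x i)) =
            inv (Finset.univ.sup fun i => x i) := (aux_inv_finset_sup _ _).symm
        rw [h2, hsupx, hmid]
  · -- (b) D2^λ ⊕ D2^λ fails C(n) for λ > n
    intro ι hι α _ e hrep hmid hC
    obtain ⟨f, hf⟩ := hι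
    have hf' : Function.Injective (f ∘ Fin.castSucc) :=
      hf.comp (Fin.castSucc_injective n)
    have hEq := aux_counterexample hrep hf' hC
    obtain ⟨hle, hinf, hsup, hbot, hcov⟩ := hrep
    set T : Set ι := Finset.univ.sup fun i => ({f (Fin.castSucc i)} : Set ι) with hTdef
    have hTr : T ⊆ Set.range (f ∘ Fin.castSucc) := by
      apply Finset.sup_le
      intro i _
      intro y hy
      exact ⟨i, (Set.mem_singleton_iff.mp hy).symm⟩
    have hnot : f (Fin.last n) ∉ T := by
      intro hmem
      obtain ⟨i, hi⟩ := hTr hmem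
      have : Fin.castSucc i = Fin.last n := hf hi
      exact absurd this (Fin.castSucc_lt_last i).ne
    have hchain : e (insert (f (Fin.last n)) T) ≤ e T := by
      calc e (insert (f (Fin.last n)) T) ≤ e Set.univ :=
            (hle _ _).mpr (Set.subset_univ _)
        _ = inv (e Set.univ) := hmid.symm
        _ ≤ inv (e T) := inv_anti _ _ ((hle _ _).mpr (Set.subset_univ T))
        _ = e T := hEq.symm
    have hsub : insert (f (Fin.last n)) T ⊆ T := (hle _ _).mp hchain
    exact hnot (hsub (Set.mem_insert _ _))
  · -- (c) D2^κ ⊕ D2 ⊕ D2^κ fails C(n) for κ ≥ n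
    intro ι hι α _ e hrep hle2 hne hC
    obtain ⟨f, hf⟩ := hι
    have hEq := aux_counterexample hrep hf hC
    obtain ⟨hle, hinf, hsup, hbot, hcov⟩ := hrep
    set T : Set ι := Finset.univ.sup fun i => ({f i} : Set ι) with hTdef
    have hTle : e T ≤ e Set.univ := (hle _ _).mpr (Set.subset_univ T)
    have hrev : inv (e Set.univ) ≤ e Set.univ :=
      le_trans (inv_anti _ _ hTle) (le_trans hEq.symm.le hTle)
    exact hne (le_antisymm hle2 hrev)
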